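/- Let Γ and Γ₀ be finitely generated groups and suppose there is a surjective homomorphism Γ → Γ₀ with finite kernel. Then Γ has the U-property if and only if Γ₀ has the U-property. -/

import Mathlib

/-- The word length of `γ` with respect to a generating set `S`. -/
noncomputable def wordLength {Γ : Type*} [Group Γ] (S : Set Γ) (γ : Γ) : ℕ :=
  sInf {n | ∃ l : List Γ, (∀ x ∈ l, x ∈ S ∨ x⁻¹ ∈ S) ∧ l.length = n ∧ l.prod = γ}

/-- The translation length `ℓ(γ) = inf_η ‖η γ η⁻¹‖`. -/
noncomputable def transLength {Γ : Type*} [Group Γ] (S : Set Γ) (γ : Γ) : ℕ :=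
  sInf {n | ∃ η : Γ, wordLength S (η * γ * η⁻¹) = n}

/-- A group has the U-property (is undistorted in its conjugacy classes) if, for
any finite generating set, there are finitely many elements `g₁, …, g_p` and
constants `A, B > 0` with `‖γ‖ ≤ A · sup_i ℓ(g_i γ) + B` for all `γ`. -/
def HasUProperty (G : Type*) [Group G] : Prop :=
  ∀ S : Set G, S.Finite → Subgroup.closure S = ⊤ →
    ∃ (p : ℕ), 0 < p ∧ ∃ (g : Fin p → G) (A B : ℝ), 0 < A ∧ 0 < B ∧
      ∀ γ : G, (wordLength S γ : ℝ)
        ≤ A * (⨆ i : Fin p, (transLength S (g i * γ) : ℝ)) + B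


/-!
Word length and translation length are quasi-preserved by a surjection `φ : Γ → Γ₀` with finite
kernel, once the generating sets are compatible (`φ` maps `S` into `T ∪ {1}` and `T ⊆ φ '' S`):
`‖φ γ‖ ≤ ‖γ‖ ≤ ‖φ γ‖ + C`, where `C` bounds the length of the finitely many kernel elements, and
the same for `ℓ` since conjugators lift along `φ`. Such errors are absorbed into the constant `B` of
the U-property. Every finite generating set `S` of `Γ` is compatible with `φ '' S`, and every
finite generating set `T` of `Γ₀` with a set of lifts of `T` enlarged by the kernel.
-/

open Subgroup

section WordLength

variable {G : Type*} [Group G] {S : Set G}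

lemma wordLength_list_prod_le_length {l : List G} (hl : ∀ x ∈ l, x ∈ S ∨ x⁻¹ ∈ S) :
    wordLength S l.prod ≤ l.length :=
  Nat.sInf_le ⟨l, hl, rfl, rfl⟩

lemma exists_word_length_eq_wordLength (hS : closure S = ⊤) (γ : G) :
    ∃ l : List G, (∀ x ∈ l, x ∈ S ∨ x⁻¹ ∈ S) ∧ l.length = wordLength S γ ∧ l.prod = γ := by
  have hγ : γ ∈ (closure S).toSubmonoid := hS ▸ mem_top γ
  rw [closure_toSubmonoid] at hγ
  obtain ⟨l, hl, hprod⟩ := Submonoid.exists_list_of_mem_closure hγ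
  exact Nat.sInf_mem
    (s := {n | ∃ l : List G, (∀ x ∈ l, x ∈ S ∨ x⁻¹ ∈ S) ∧ l.length = n ∧ l.prod = γ})
    ⟨l.length, l, fun x hx => (hl x hx).imp id Set.mem_inv.mp, rfl, hprod⟩

lemma wordLength_mul_le (hS : closure S = ⊤) (a b : G) :
    wordLength S (a * b) ≤ wordLength S a + wordLength S b := by
  obtain ⟨la, hla, hlena, rfl⟩ := exists_word_length_eq_wordLength hS a
  obtain ⟨lb, hlb, hlenb, rfl⟩ := exists_word_length_eq_wordLength hS b
  rw [← hlena, ← hlenb, ← List.length_append, ← List.prod_append]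
  exact wordLength_list_prod_le_length fun x hx => (List.mem_append.mp hx).elim (hla x) (hlb x)

lemma wordLength_le_one {x : G} (hx : x = 1 ∨ x ∈ S ∨ x⁻¹ ∈ S) : wordLength S x ≤ 1 := by
  rcases hx with rfl | hx
  · exact (wordLength_list_prod_le_length (l := []) (by simp)).trans zero_le_one
  · simpa using wordLength_list_prod_le_length (l := [x]) (by simpa using hx)

lemma wordLength_list_prod_le (hS : closure S = ⊤) {l : List G}
    (hl : ∀ x ∈ l, wordLength S x ≤ 1) : wordLength S l.prod ≤ l.length := by
  induction l with
  | nil => simpa using wordLength_list_prod_le_length (S := S) (l := []) (by simp)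
  | cons x l ih =>
    rw [List.prod_cons, List.length_cons, add_comm l.length]
    exact (wordLength_mul_le hS x l.prod).trans <|
      add_le_add (hl x List.mem_cons_self) (ih fun y hy => hl y (List.mem_cons_of_mem x hy))

lemma transLength_le_wordLength_conj (S : Set G) (γ η : G) :
    transLength S γ ≤ wordLength S (η * γ * η⁻¹) :=
  Nat.sInf_le ⟨η, rfl⟩

lemma exists_wordLength_conj_eq_transLength (S : Set G) (γ : G) :
    ∃ η : G, wordLength S (η * γ * η⁻¹) = transLength S γ :=
  Nat.sInf_mem (s := {n | ∃ η : G, wordLength S (η * γ * η⁻¹) = n}) ⟨_, 1, rfl⟩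

end WordLength

def HasUPropertyFor {G : Type*} [Group G] (S : Set G) : Prop :=
  ∃ (p : ℕ), 0 < p ∧ ∃ (g : Fin p → G) (A B : ℝ), 0 < A ∧ 0 < B ∧
    ∀ γ : G, (wordLength S γ : ℝ) ≤ A * (⨆ i : Fin p, (transLength S (g i * γ) : ℝ)) + B

/-- `π` transports the elements to be measured from `H` to `G`, `σ` the elements `gᵢ` back. -/
lemma HasUPropertyFor.of_comparison {G H : Type*} [Group G] [Group H] {S : Set G} {T : Set H}
    (hS : HasUPropertyFor S) (π : H → G) (σ : G → H) {C D : ℕ}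
    (hw : ∀ h, wordLength T h ≤ wordLength S (π h) + D)
    (ht : ∀ x h, transLength S (x * π h) ≤ transLength T (σ x * h) + C) :
    HasUPropertyFor T := by
  obtain ⟨p, hp, g, A, B, hA, hB, hineq⟩ := hS
  have : Nonempty (Fin p) := ⟨⟨0, hp⟩⟩
  refine ⟨p, hp, σ ∘ g, A, A * C + B + D, hA, by positivity, fun h => ?_⟩
  have hsup : (⨆ i, (transLength S (g i * π h) : ℝ))
      ≤ (⨆ i, (transLength T (σ (g i) * h) : ℝ)) + C :=
    ciSup_le fun i => calc
      (transLength S (g i * π h) : ℝ) ≤ transLength T (σ (g i) * h) + C := by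
          exact_mod_cast ht (g i) h
      _ ≤ _ := by
          gcongr
          exact le_ciSup (f := fun j => (transLength T (σ (g j) * h) : ℝ))
            (Set.finite_range _).bddAbove i
  calc (wordLength T h : ℝ) ≤ wordLength S (π h) + D := by exact_mod_cast hw h
    _ ≤ A * (⨆ i, (transLength S (g i * π h) : ℝ)) + B + D := by gcongr; exact hineq _
    _ ≤ A * ((⨆ i, (transLength T (σ (g i) * h) : ℝ)) + C) + B + D := by gcongr
    _ = A * (⨆ i, (transLength T ((σ ∘ g) i * h) : ℝ)) + (A * C + B + D) := by
        simp only [Function.comp_apply]; ring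

section Hom

variable {Γ Γ₀ : Type*} [Group Γ] [Group Γ₀] (φ : Γ →* Γ₀) {S : Set Γ} {T : Set Γ₀}

lemma wordLength_map_le (hS : closure S = ⊤) (hT : closure T = ⊤)
    (hST : ∀ x ∈ S, φ x = 1 ∨ φ x ∈ T) (γ : Γ) :
    wordLength T (φ γ) ≤ wordLength S γ := by
  obtain ⟨l, hl, hlen, rfl⟩ := exists_word_length_eq_wordLength hS γ
  rw [← hlen, map_list_prod, ← List.length_map φ]
  refine wordLength_list_prod_le hT fun y hy => ?_
  obtain ⟨x, hx, rfl⟩ := List.mem_map.mp hy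
  apply wordLength_le_one
  rcases hl x hx with hx | hx
  · exact (hST x hx).imp id Or.inl
  · simpa [map_inv] using (hST x⁻¹ hx).imp id Or.inr

lemma exists_word_map_eq (hTS : T ⊆ φ '' S) {l₀ : List Γ₀}
    (hl₀ : ∀ y ∈ l₀, y ∈ T ∨ y⁻¹ ∈ T) :
    ∃ l : List Γ, (∀ x ∈ l, x ∈ S ∨ x⁻¹ ∈ S) ∧ l.map φ = l₀ := by
  induction l₀ with
  | nil => exact ⟨[], by simp, rfl⟩
  | cons y l₀ ih =>
    obtain ⟨l, hl, rfl⟩ := ih fun z hz => hl₀ z (List.mem_cons_of_mem y hz)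
    obtain ⟨x, hx, hxy⟩ : ∃ x, (x ∈ S ∨ x⁻¹ ∈ S) ∧ φ x = y := by
      rcases hl₀ y List.mem_cons_self with hy | hy
      · obtain ⟨x, hx, rfl⟩ := hTS hy
        exact ⟨x, Or.inl hx, rfl⟩
      · obtain ⟨x, hx, hxy⟩ := hTS hy
        exact ⟨x⁻¹, Or.inr (by simpa using hx), by rw [map_inv, hxy, inv_inv]⟩
    exact ⟨x :: l, List.forall_mem_cons.mpr ⟨hx, hl⟩, by rw [List.map_cons, hxy]⟩

lemma wordLength_le_map_add (hS : closure S = ⊤) (hT : closure T = ⊤) (hTS : T ⊆ φ '' S)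
    {C : ℕ} (hC : ∀ k ∈ φ.ker, wordLength S k ≤ C) (γ : Γ) :
    wordLength S γ ≤ wordLength T (φ γ) + C := by
  obtain ⟨_, hl₀, hlen, hprod⟩ := exists_word_length_eq_wordLength hT (φ γ)
  obtain ⟨l, hl, rfl⟩ := exists_word_map_eq φ hTS hl₀
  have hk : l.prod⁻¹ * γ ∈ φ.ker := by
    rw [MonoidHom.mem_ker, map_mul, map_inv, map_list_prod, hprod, inv_mul_cancel]
  calc wordLength S γ = wordLength S (l.prod * (l.prod⁻¹ * γ)) := by rw [mul_inv_cancel_left]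
    _ ≤ wordLength S l.prod + wordLength S (l.prod⁻¹ * γ) := wordLength_mul_le hS _ _
    _ ≤ l.length + C := add_le_add (wordLength_list_prod_le_length hl) (hC _ hk)
    _ = wordLength T (φ γ) + C := by rw [← hlen, List.length_map]

lemma transLength_map_le (hw : ∀ γ, wordLength T (φ γ) ≤ wordLength S γ) (γ : Γ) :
    transLength T (φ γ) ≤ transLength S γ := by
  obtain ⟨η, hη⟩ := exists_wordLength_conj_eq_transLength S γ
  calc transLength T (φ γ) ≤ wordLength T (φ η * φ γ * (φ η)⁻¹) :=
        transLength_le_wordLength_conj _ _ _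
    _ = wordLength T (φ (η * γ * η⁻¹)) := by rw [map_mul, map_mul, map_inv]
    _ ≤ transLength S γ := hη ▸ hw _

lemma transLength_le_map_add (hφ : Function.Surjective φ) {C : ℕ}
    (hw : ∀ γ, wordLength S γ ≤ wordLength T (φ γ) + C) (γ : Γ) :
    transLength S γ ≤ transLength T (φ γ) + C := by
  obtain ⟨η₀, hη₀⟩ := exists_wordLength_conj_eq_transLength T (φ γ)
  obtain ⟨η, rfl⟩ := hφ η₀
  calc transLength S γ ≤ wordLength S (η * γ * η⁻¹) := transLength_le_wordLength_conj _ _ _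
    _ ≤ wordLength T (φ (η * γ * η⁻¹)) + C := hw _
    _ = transLength T (φ γ) + C := by rw [map_mul, map_mul, map_inv, hη₀]

lemma exists_forall_mem_ker_wordLength_le [Finite φ.ker] (S : Set Γ) :
    ∃ C : ℕ, ∀ k ∈ φ.ker, wordLength S k ≤ C := by
  obtain ⟨C, hC⟩ := ((Set.toFinite (φ.ker : Set Γ)).image (wordLength S)).bddAbove
  exact ⟨C, fun k hk => hC ⟨k, hk, rfl⟩⟩

lemma closure_image_surjInv_union_ker (hφ : Function.Surjective φ) (hT : closure T = ⊤) :
    closure (Function.surjInv hφ '' T ∪ φ.ker) = ⊤ := by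
  set H := closure (Function.surjInv hφ '' T ∪ φ.ker)
  have hmap : H.map φ = ⊤ := by
    rw [eq_top_iff, ← hT, MonoidHom.map_closure]
    refine closure_mono fun y hy => ⟨Function.surjInv hφ y, Or.inl ⟨y, hy, rfl⟩, ?_⟩
    exact Function.surjInv_eq hφ y
  have hker : φ.ker ≤ H := fun k hk => subset_closure (Or.inr hk)
  rw [← sup_eq_left.mpr hker, ← comap_map_eq, hmap, comap_top]

variable [Finite φ.ker]

theorem HasUProperty.map_of_finite_ker (hφ : Function.Surjective φ) (hU : HasUProperty Γ) :
    HasUProperty Γ₀ := by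
  intro T hTfin hT
  set ρ := Function.surjInv hφ
  have hS := closure_image_surjInv_union_ker φ hφ hT
  have hSfin : (ρ '' T ∪ φ.ker).Finite := (hTfin.image ρ).union (Set.toFinite _)
  obtain ⟨C, hC⟩ := exists_forall_mem_ker_wordLength_le φ (ρ '' T ∪ φ.ker)
  have hw := wordLength_map_le φ hS hT <| by
    rintro x (⟨y, hy, rfl⟩ | hx)
    · exact Or.inr ((Function.surjInv_eq hφ y).symm ▸ hy)
    · exact Or.inl hx
  have hw' := wordLength_le_map_add φ hS hT
    (fun y hy => ⟨ρ y, Or.inl ⟨y, hy, rfl⟩, Function.surjInv_eq hφ y⟩) hC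
  refine HasUPropertyFor.of_comparison (hU _ hSfin hS) ρ φ (C := C) (D := 0)
    (fun γ₀ => ?_) (fun x γ₀ => ?_)
  · simpa [ρ, Function.surjInv_eq hφ] using hw (ρ γ₀)
  · simpa [ρ, Function.surjInv_eq hφ] using transLength_le_map_add φ hφ hw' (x * ρ γ₀)

theorem HasUProperty.comap_of_finite_ker (hφ : Function.Surjective φ) (hU : HasUProperty Γ₀) :
    HasUProperty Γ := by
  intro S hSfin hS
  have hT : closure (φ '' S) = ⊤ := by
    rw [← MonoidHom.map_closure, hS, map_top_of_surjective φ hφ]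
  obtain ⟨C, hC⟩ := exists_forall_mem_ker_wordLength_le φ S
  have hw := wordLength_map_le φ hS hT fun x hx => Or.inr ⟨x, hx, rfl⟩
  refine HasUPropertyFor.of_comparison (hU _ (hSfin.image φ) hT) φ (Function.surjInv hφ) (C := 0)
    (wordLength_le_map_add φ hS hT subset_rfl hC) (fun x γ => ?_)
  simpa [Function.surjInv_eq hφ] using transLength_map_le φ hw (Function.surjInv hφ x * γ)

end Hom

theorem U_property_iff_of_surjective_finite_kernel_general
    {Γ Γ₀ : Type*} [Group Γ] [Group Γ₀]
    (φ : Γ →* Γ₀) (hsurj : Function.Surjective φ)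
    (hker : Finite φ.ker) :
    HasUProperty Γ ↔ HasUProperty Γ₀ :=
  ⟨HasUProperty.map_of_finite_ker φ hsurj, HasUProperty.comap_of_finite_ker φ hsurj⟩

/-- If `Γ → Γ₀` is a surjective homomorphism with finite kernel between finitely
generated groups, then `Γ` has the U-property if and only if `Γ₀` has. -/
theorem U_property_iff_of_surjective_finite_kernel
    {Γ Γ₀ : Type*} [Group Γ] [Group Γ₀]
    (hfg : ∃ S : Set Γ, S.Finite ∧ Subgroup.closure S = ⊤)
    (hfg₀ : ∃ S₀ : Set Γ₀, S₀.Finite ∧ Subgroup.closure S₀ = ⊤)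
    (φ : Γ →* Γ₀) (hsurj : Function.Surjective φ)
    (hker : Finite φ.ker) :
    HasUProperty Γ ↔ HasUProperty Γ₀ :=
  U_property_iff_of_surjective_finite_kernel_general φ hsurj hker
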